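/- arXiv:2211.16747 — 2 statements merged into one kernel-verified Lean document; each statement's English description precedes it below -/
import Mathlib

section
/- Let G=(V,E) be a connected finite graph with positive edge costs, let α ≥ 1, and let (U, V∖U) be an α-approximate minimum cut of G. Then there exists a subset S ⊆ U with |S| ≤ ⌊2α⌋+1 such that (U, V∖U) is the unique minimum (S, V∖U)-terminal cut of G. -/
open Finset

variable {V : Type*} [Fintype V] [DecidableEq V]

/- The value of the cut `(U, Uᶜ)`: total cost of edges with exactly one endpoint in `U`. -/
open Classical in
noncomputable def cutVal (G : SimpleGraph V) (c : V → V → ℝ) (U : Finset V) : ℝ :=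
  ∑ u ∈ U, ∑ v ∈ Uᶜ, if G.Adj u v then c u v else 0

/-- `(X, Xᶜ)` is an `(S,T)`-terminal cut: `S ⊆ X ⊆ Tᶜ`. -/
def IsTerminalCut (S T X : Finset V) : Prop := S ⊆ X ∧ X ⊆ Tᶜ

/-- `(X, Xᶜ)` is a minimum `(S,T)`-terminal cut. -/
def IsMinTerminalCut (G : SimpleGraph V) (c : V → V → ℝ) (S T X : Finset V) : Prop :=
  IsTerminalCut S T X ∧ ∀ Y : Finset V, IsTerminalCut S T Y → cutVal G c X ≤ cutVal G c Y

/-- `(X, Xᶜ)` is the unique minimum `(S,T)`-terminal cut. -/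
def IsUniqueMinTerminalCut (G : SimpleGraph V) (c : V → V → ℝ) (S T X : Finset V) : Prop :=
  IsMinTerminalCut G c S T X ∧ ∀ Y : Finset V, IsMinTerminalCut G c S T Y → Y = X

/-!
Take `S` inclusion-minimal such that `U` is the unique minimum `(S, Uᶜ)`-terminal cut (`S = U` is
one such set). For each `s ∈ S`, minimality yields a cut `B s ⊆ U` with `d(B s) ≤ d(U)` that
contains `S \ {s}` but not `s`. Let `σ x = {s ∈ S | x ∉ B s}`, `P s = {x | σ x = {s}}` and
`Q j = {x | |σ x| < j}` for `3 ≤ j ≤ |S|`. Every pair of vertices is separated by at most as many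
members of the families `P` and `Q` together as of `B`, so (costs being symmetric)
`∑ d(P s) + ∑ d(Q j) ≤ ∑ d(B s) ≤ |S| d(U)`. Each `Q j` is an `(S, Uᶜ)`-terminal cut, hence
`d(Q j) ≥ d(U)`, and therefore `|S| λ ≤ ∑ d(P s) ≤ 2 d(U) ≤ 2αλ`.
-/
open symmDiff

section Counting

variable {α : Type*} [DecidableEq α]

theorem card_filter_eq_singleton_le (S a : Finset α) :
    #{s ∈ S | a = {s}} ≤ if #a = 1 then 1 else 0 := by
  split_ifs with ha
  · exact card_le_one.mpr fun s hs t ht ↦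
      singleton_injective (((mem_filter.mp hs).2).symm.trans (mem_filter.mp ht).2)
  · refine (card_eq_zero.mpr <| filter_eq_empty_iff.mpr fun s _ (hs : a = {s}) ↦ ?_).le
    exact ha (hs ▸ card_singleton s)

theorem card_symmDiff_add_two_mul_card_inter (a b : Finset α) :
    #(a ∆ b) + 2 * #(a ∩ b) = #a + #b := by
  rw [Finset.symmDiff_def, card_union_of_disjoint disjoint_sdiff_sdiff,
    ← card_sdiff_add_card_inter a b, ← card_sdiff_add_card_inter b a, inter_comm b a]
  ring

theorem card_filter_xor_lt_le (N k l : ℕ) :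
    #{j ∈ Icc 3 N | Xor (k < j) (l < j)} ≤ max k l + 1 - max 3 (min k l + 1) := by
  calc #{j ∈ Icc 3 N | Xor (k < j) (l < j)} ≤ #(Icc (max 3 (min k l + 1)) (max k l)) := by
        refine card_le_card fun j hj ↦ ?_
        simp only [mem_filter, mem_Icc, xor_def] at hj ⊢
        omega
    _ = max k l + 1 - max 3 (min k l + 1) := Nat.card_Icc _ _

theorem card_xor_singleton_add_card_xor_lt_le (S a b : Finset α) (N : ℕ) :
    #{s ∈ S | Xor (a = {s}) (b = {s})} + #{j ∈ Icc 3 N | Xor (#a < j) (#b < j)} ≤ #(a ∆ b) := by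
  obtain rfl | hab := eq_or_ne a b
  · simp
  have hsingle : #{s ∈ S | Xor (a = {s}) (b = {s})} ≤
      (if #a = 1 then 1 else 0) + (if #b = 1 then 1 else 0) := by
    refine (card_le_card fun s hs ↦ ?_).trans ((card_union_le _ _).trans
      (add_le_add (card_filter_eq_singleton_le S a) (card_filter_eq_singleton_le S b)))
    simp only [mem_filter, mem_union, xor_def] at hs ⊢
    tauto
  have hthreshold := card_filter_xor_lt_le N #a #b
  have hsymm := card_symmDiff_add_two_mul_card_inter a b
  have hpos : 0 < #(a ∆ b) := card_pos.mpr (symmDiff_nonempty.mpr hab)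
  have hinter_a : #(a ∩ b) ≤ #a := card_le_card inter_subset_left
  have hinter_b : #(a ∩ b) ≤ #b := card_le_card inter_subset_right
  split_ifs at hsingle <;> omega

end Counting

section Cuts

variable (G : SimpleGraph V) (c : V → V → ℝ)

open Classical in
noncomputable def edgeCost (u v : V) : ℝ := if G.Adj u v then c u v else 0

variable {G c}

theorem cutVal_eq_sum_edgeCost (U : Finset V) :
    cutVal G c U = ∑ u ∈ U, ∑ v ∈ Uᶜ, edgeCost G c u v := rfl

omit [Fintype V] [DecidableEq V] in
theorem edgeCost_nonneg (hc : ∀ u v, G.Adj u v → 0 ≤ c u v) (u v : V) : 0 ≤ edgeCost G c u v := by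
  unfold edgeCost
  split_ifs with h
  exacts [hc u v h, le_rfl]

omit [Fintype V] [DecidableEq V] in
theorem edgeCost_comm (hc : ∀ u v, G.Adj u v → c u v = c v u) (u v : V) :
    edgeCost G c u v = edgeCost G c v u := by
  unfold edgeCost
  by_cases h : G.Adj u v
  · rw [if_pos h, if_pos h.symm, hc u v h]
  · rw [if_neg h, if_neg (mt G.adj_symm h)]

theorem cutVal_nonneg (hc : ∀ u v, G.Adj u v → 0 ≤ c u v) (U : Finset V) : 0 ≤ cutVal G c U :=
  sum_nonneg fun _ _ ↦ sum_nonneg fun _ _ ↦ edgeCost_nonneg hc _ _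

theorem cutVal_pos (hG : G.Connected) (hc : ∀ u v, G.Adj u v → 0 < c u v) {W : Finset V}
    (hW : W.Nonempty) (hW' : W ≠ univ) : 0 < cutVal G c W := by
  obtain ⟨u, hu⟩ := hW
  obtain ⟨v, hv⟩ := not_forall.mp (mt eq_univ_iff_forall.mpr hW')
  obtain ⟨d, -, hd, hd'⟩ := (hG.preconnected u v).some.exists_boundary_dart (↑W) hu hv
  have hnonneg := edgeCost_nonneg fun u v h ↦ (hc u v h).le
  calc 0 < edgeCost G c d.fst d.snd := by rw [edgeCost, if_pos d.adj]; exact hc _ _ d.adj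
    _ ≤ ∑ v ∈ Wᶜ, edgeCost G c d.fst v :=
        single_le_sum (fun v _ ↦ hnonneg _ v) (mem_compl.mpr hd')
    _ ≤ cutVal G c W := single_le_sum (fun u _ ↦ sum_nonneg fun v _ ↦ hnonneg u v) hd

def numSeparating {ι : Type*} (T : Finset ι) (Z : ι → Finset V) (x y : V) : ℕ :=
  #{i ∈ T | Xor (x ∈ Z i) (y ∈ Z i)}

theorem two_mul_cutVal (hc : ∀ u v, G.Adj u v → c u v = c v u) (Z : Finset V) :
    2 * cutVal G c Z =
      ∑ x, ∑ y, (if Xor (x ∈ Z) (y ∈ Z) then 1 else 0) * edgeCost G c x y := by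
  have hone : cutVal G c Z = ∑ x, ∑ y, (if x ∈ Z ∧ y ∉ Z then 1 else 0) * edgeCost G c x y := by
    rw [cutVal_eq_sum_edgeCost]
    simp [ite_and, sum_ite_mem, ← mem_compl]
  have hswap : cutVal G c Z = ∑ x, ∑ y, (if y ∈ Z ∧ x ∉ Z then 1 else 0) * edgeCost G c x y := by
    rw [hone, sum_comm]
    simp_rw [edgeCost_comm hc]
  rw [two_mul]
  nth_rw 2 [hswap]
  rw [hone, ← sum_add_distrib]
  refine sum_congr rfl fun x _ ↦ ?_
  rw [← sum_add_distrib]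
  refine sum_congr rfl fun y _ ↦ ?_
  rw [← add_mul]
  congr 1
  by_cases hx : x ∈ Z <;> by_cases hy : y ∈ Z <;> simp [hx, hy]

theorem two_mul_sum_cutVal (hc : ∀ u v, G.Adj u v → c u v = c v u) {ι : Type*}
    (T : Finset ι) (Z : ι → Finset V) :
    2 * ∑ i ∈ T, cutVal G c (Z i) = ∑ x, ∑ y, numSeparating T Z x y * edgeCost G c x y := by
  simp_rw [mul_sum, two_mul_cutVal hc, numSeparating, natCast_card_filter, sum_mul]
  rw [sum_comm]
  exact sum_congr rfl fun x _ ↦ sum_comm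

end Cuts

section TerminalCuts

variable {G : SimpleGraph V} {c : V → V → ℝ} {S U : Finset V}

theorem isTerminalCut_compl_iff {X : Finset V} : IsTerminalCut S Uᶜ X ↔ S ⊆ X ∧ X ⊆ U := by
  rw [IsTerminalCut, compl_compl]

theorem isUniqueMinTerminalCut_compl_iff :
    IsUniqueMinTerminalCut G c S Uᶜ U ↔
      S ⊆ U ∧ ∀ X, S ⊆ X → X ⊆ U → X ≠ U → cutVal G c U < cutVal G c X := by
  simp only [IsUniqueMinTerminalCut, IsMinTerminalCut, isTerminalCut_compl_iff]
  constructor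
  · rintro ⟨⟨⟨hSU, -⟩, hmin⟩, huniq⟩
    exact ⟨hSU, fun X hSX hXU hXU' ↦ lt_of_not_ge fun hle ↦
      hXU' (huniq X ⟨⟨hSX, hXU⟩, fun Y hY ↦ hle.trans (hmin Y hY)⟩)⟩
  · rintro ⟨hSU, hlt⟩
    have hmin : ∀ Y, S ⊆ Y ∧ Y ⊆ U → cutVal G c U ≤ cutVal G c Y := by
      rintro Y ⟨hSY, hYU⟩
      obtain rfl | hYU' := eq_or_ne Y U
      exacts [le_rfl, (hlt Y hSY hYU hYU').le]
    exact ⟨⟨⟨hSU, subset_rfl⟩, hmin⟩, fun Y ⟨⟨hSY, hYU⟩, hYmin⟩ ↦ by_contra fun hYU' ↦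
      (hYmin U ⟨hSU, subset_rfl⟩).not_gt (hlt Y hSY hYU hYU')⟩

theorem exists_minimal_isUniqueMinTerminalCut_compl (U : Finset V) :
    ∃ S, Minimal (fun S ↦ IsUniqueMinTerminalCut G c S Uᶜ U) S :=
  exists_minimal_of_wellFoundedLT _ ⟨U, isUniqueMinTerminalCut_compl_iff.mpr
    ⟨subset_rfl, fun _ hUX hXU hXU' ↦ absurd (hXU.antisymm hUX) hXU'⟩⟩

theorem nonempty_of_isUniqueMinTerminalCut_compl (hc : ∀ u v, G.Adj u v → 0 ≤ c u v)
    (hU : U.Nonempty) (h : IsUniqueMinTerminalCut G c S Uᶜ U) : S.Nonempty := by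
  rw [nonempty_iff_ne_empty]
  rintro rfl
  have hlt := (isUniqueMinTerminalCut_compl_iff.mp h).2 ∅ subset_rfl (empty_subset U)
    hU.ne_empty.symm
  simp only [cutVal, sum_empty] at hlt
  exact hlt.not_ge (cutVal_nonneg hc U)

theorem exists_cutVal_le_of_minimal (hS : Minimal (fun S ↦ IsUniqueMinTerminalCut G c S Uᶜ U) S)
    {s : V} (hs : s ∈ S) :
    ∃ X ⊆ U, cutVal G c X ≤ cutVal G c U ∧ ∀ t ∈ S, t ∈ X ↔ t ≠ s := by
  obtain ⟨hSU, hlt⟩ := isUniqueMinTerminalCut_compl_iff.mp hS.prop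
  have herase := hS.not_prop_of_lt (erase_ssubset hs)
  simp only [isUniqueMinTerminalCut_compl_iff, (erase_subset s S).trans hSU, true_and,
    not_forall, not_lt] at herase
  obtain ⟨X, hSX, hXU, hXU', hle⟩ := herase
  have hsX : s ∉ X := by
    intro hsX
    have hSX' : S ⊆ X := by
      rw [← insert_erase hs]
      exact insert_subset hsX hSX
    exact (hle.trans_lt (hlt X hSX' hXU hXU')).false
  refine ⟨X, hXU, hle, fun t ht ↦ ⟨?_, fun hts ↦ hSX (mem_erase.mpr ⟨hts, ht⟩)⟩⟩
  rintro htX rfl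
  exact hsX htX

end TerminalCuts

section Uncrossing

variable {G : SimpleGraph V} {c : V → V → ℝ} {S U : Finset V} {B : V → Finset V}

def missedBy (S : Finset V) (B : V → Finset V) (x : V) : Finset V := {s ∈ S | x ∉ B s}

omit [Fintype V] in
theorem missedBy_of_notMem (hBU : ∀ s ∈ S, B s ⊆ U) {x : V} (hx : x ∉ U) :
    missedBy S B x = S :=
  filter_true_of_mem fun s hs hxs ↦ hx (hBU s hs hxs)

omit [Fintype V] in
theorem missedBy_of_mem (hBS : ∀ s ∈ S, ∀ t ∈ S, t ∈ B s ↔ t ≠ s) {s : V} (hs : s ∈ S) :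
    missedBy S B s = {s} := by
  ext t
  simp only [missedBy, mem_filter, mem_singleton]
  constructor
  · rintro ⟨ht, hst⟩
    by_contra hts
    exact hst ((hBS t ht s hs).mpr (Ne.symm hts))
  · intro hts
    rw [hts]
    exact ⟨hs, fun h ↦ (hBS s hs s hs).mp h rfl⟩

omit [Fintype V] in
theorem missedBy_symmDiff (S : Finset V) (B : V → Finset V) (x y : V) :
    missedBy S B x ∆ missedBy S B y = {s ∈ S | Xor (x ∈ B s) (y ∈ B s)} := by
  ext s
  simp only [missedBy, mem_symmDiff, mem_filter, xor_def]
  tauto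

theorem sum_cutVal_missedBy_eq_singleton_le (hc : ∀ u v, G.Adj u v → 0 ≤ c u v)
    (hcs : ∀ u v, G.Adj u v → c u v = c v u) (hS : 2 ≤ #S) (hU : IsMinTerminalCut G c S Uᶜ U)
    (hBU : ∀ s ∈ S, B s ⊆ U) (hBS : ∀ s ∈ S, ∀ t ∈ S, t ∈ B s ↔ t ≠ s)
    (hB : ∀ s ∈ S, cutVal G c (B s) ≤ cutVal G c U) :
    ∑ s ∈ S, cutVal G c {x | missedBy S B x = {s}} ≤ 2 * cutVal G c U := by
  set P : V → Finset V := fun s ↦ {x | missedBy S B x = {s}}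
  set Q : ℕ → Finset V := fun j ↦ {x | #(missedBy S B x) < j}
  have hQ : ∀ j ∈ Icc 3 #S, cutVal G c U ≤ cutVal G c (Q j) := by
    intro j hj
    rw [mem_Icc] at hj
    refine hU.2 _ (isTerminalCut_compl_iff.mpr ⟨fun s hs ↦ ?_, fun x hx ↦ ?_⟩)
    · simp only [Q, mem_filter_univ, missedBy_of_mem hBS hs, card_singleton]
      omega
    · by_contra hxU
      simp only [Q, mem_filter_univ, missedBy_of_notMem hBU hxU] at hx
      omega
  have hsep : ∀ x y, (numSeparating S P x y + numSeparating (Icc 3 #S) Q x y : ℝ) ≤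
      numSeparating S B x y := by
    intro x y
    simp only [numSeparating, ← missedBy_symmDiff S B x y, P, Q, mem_filter, mem_univ, true_and]
    exact_mod_cast card_xor_singleton_add_card_xor_lt_le S _ _ #S
  have huncross : ∑ s ∈ S, cutVal G c (P s) + ∑ j ∈ Icc 3 #S, cutVal G c (Q j) ≤
      ∑ s ∈ S, cutVal G c (B s) := by
    suffices 2 * (∑ s ∈ S, cutVal G c (P s) + ∑ j ∈ Icc 3 #S, cutVal G c (Q j)) ≤
        2 * ∑ s ∈ S, cutVal G c (B s) by linarith
    rw [mul_add, two_mul_sum_cutVal hcs, two_mul_sum_cutVal hcs, two_mul_sum_cutVal hcs,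
      ← sum_add_distrib]
    refine sum_le_sum fun x _ ↦ ?_
    rw [← sum_add_distrib]
    refine sum_le_sum fun y _ ↦ ?_
    rw [← add_mul]
    exact mul_le_mul_of_nonneg_right (hsep x y) (edgeCost_nonneg hc x y)
  have hBsum : ∑ s ∈ S, cutVal G c (B s) ≤ #S * cutVal G c U := by
    simpa using sum_le_sum hB
  have hQsum : (#S - 2 : ℝ) * cutVal G c U ≤ ∑ j ∈ Icc 3 #S, cutVal G c (Q j) := by
    have h := card_nsmul_le_sum _ _ _ hQ
    rw [Nat.card_Icc, nsmul_eq_mul, Nat.cast_sub (by omega)] at h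
    push_cast at h
    linarith
  linarith

theorem card_mul_le_two_mul_cutVal (hc : ∀ u v, G.Adj u v → 0 ≤ c u v)
    (hcs : ∀ u v, G.Adj u v → c u v = c v u) {lam : ℝ}
    (hlam : ∀ W : Finset V, W.Nonempty → W ≠ univ → lam ≤ cutVal G c W) (hU : U ≠ univ)
    (hS : Minimal (fun S ↦ IsUniqueMinTerminalCut G c S Uᶜ U) S) (hS2 : 2 ≤ #S) :
    #S * lam ≤ 2 * cutVal G c U := by
  choose! B hBU hB hBS using fun s (hs : s ∈ S) ↦ exists_cutVal_le_of_minimal hS hs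
  have hP : ∀ s ∈ S, lam ≤ cutVal G c {x | missedBy S B x = {s}} := by
    intro s hs
    refine hlam _ ⟨s, by simp [missedBy_of_mem hBS hs]⟩ fun huniv ↦ hU ?_
    refine eq_univ_iff_forall.mpr fun x ↦ by_contra fun hx ↦ ?_
    have hxP : x ∈ ({x | missedBy S B x = {s}} : Finset V) := by
      rw [huniv]
      exact mem_univ x
    simp only [mem_filter_univ, missedBy_of_notMem hBU hx] at hxP
    simp [hxP] at hS2
  calc #S * lam ≤ ∑ s ∈ S, cutVal G c {x | missedBy S B x = {s}} := by
        simpa using card_nsmul_le_sum _ _ _ hP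
    _ ≤ 2 * cutVal G c U := sum_cutVal_missedBy_eq_singleton_le hc hcs hS2 hS.prop.1 hBU hBS hB

end Uncrossing

theorem approx_min_cut_unique_S_complement_terminal_cut_general
    (G : SimpleGraph V) (hG : G.Connected)
    (c : V → V → ℝ) (hc : ∀ u v, G.Adj u v → 0 < c u v) (hcsymm : ∀ u v, c u v = c v u)
    (α : ℝ) (lam : ℝ)
    (hlam : IsLeast {x : ℝ | ∃ W : Finset V, W.Nonempty ∧ W ≠ Finset.univ ∧ cutVal G c W = x} lam)
    (U : Finset V) (hUne : U.Nonempty) (hUp : U ≠ Finset.univ)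
    (happrox : cutVal G c U ≤ α * lam) :
    ∃ S : Finset V, S ⊆ U ∧ S.Nonempty ∧ S.card ≤ ⌊2 * α⌋₊ + 1 ∧
      IsUniqueMinTerminalCut G c S Uᶜ U := by
  obtain ⟨S, hS⟩ := exists_minimal_isUniqueMinTerminalCut_compl (G := G) (c := c) U
  have hc0 : ∀ u v, G.Adj u v → 0 ≤ c u v := fun u v h ↦ (hc u v h).le
  refine ⟨S, (isUniqueMinTerminalCut_compl_iff.mp hS.prop).1,
    nonempty_of_isUniqueMinTerminalCut_compl hc0 hUne hS.prop, ?_, hS.prop⟩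
  obtain hS1 | hS2 := le_or_gt #S 1
  · omega
  have hlam_pos : 0 < lam := by
    obtain ⟨W, hW, hW', rfl⟩ := hlam.1
    exact cutVal_pos hG hc hW hW'
  have hcard := card_mul_le_two_mul_cutVal hc0 (fun u v _ ↦ hcsymm u v)
    (fun W hW hW' ↦ hlam.2 ⟨W, hW, hW', rfl⟩) hUp hS hS2
  have hcard_le : (#S : ℝ) ≤ 2 * α := le_of_mul_le_mul_right (by linarith) hlam_pos
  exact (Nat.le_floor hcard_le).trans (Nat.le_succ _)

/-- Every α-approximate minimum cut (U, Uᶜ) of a connected graph is the unique minimum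
(S, Uᶜ)-terminal cut for some S ⊆ U of size at most ⌊2α⌋+1. -/
theorem approx_min_cut_unique_S_complement_terminal_cut
    (G : SimpleGraph V) (hG : G.Connected)
    (c : V → V → ℝ) (hc : ∀ u v, G.Adj u v → 0 < c u v) (hcsymm : ∀ u v, c u v = c v u)
    (α : ℝ) (hα : 1 ≤ α) (lam : ℝ)
    (hlam : IsLeast {x : ℝ | ∃ W : Finset V, W.Nonempty ∧ W ≠ Finset.univ ∧ cutVal G c W = x} lam)
    (U : Finset V) (hUne : U.Nonempty) (hUp : U ≠ Finset.univ)
    (happrox : cutVal G c U ≤ α * lam) :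
    ∃ S : Finset V, S ⊆ U ∧ S.Nonempty ∧ S.card ≤ ⌊2 * α⌋₊ + 1 ∧
      IsUniqueMinTerminalCut G c S Uᶜ U :=
  approx_min_cut_unique_S_complement_terminal_cut_general G hG c hc hcsymm α lam hlam U hUne hUp
    happrox
end

section
/- Let G=(V,E) be a finite graph with positive edge costs and let ∅ ≠ R ⊊ U ⊊ V. Let S = {u_1,…,u_p} ⊆ U∖R with p ≥ 2 distinct elements. For each i ∈ [p], let (V∖A_i, A_i) be a minimum ((S∪R)∖{u_i}, V∖U)-terminal cut, and suppose u_i ∈ A_i∖(∪_{j∈[p], j≠i} A_j) for every i ∈ [p]. Define Z := ∩_{i=1}^p (V∖A_i), W := ∪_{1≤i<j≤p}(A_i ∩ A_j), and Y_i := A_i∖W for each i ∈ [p]. Then (Y_1,…,Y_p,W,Z) is a partition of V into p+2 nonempty parts and σ(Y_1,…,Y_p,W,Z) ≤ min{d(A_i)+d(A_j) : i,j ∈ [p], i ≠ j}. -/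
open Finset

variable {V : Type*} [Fintype V] [DecidableEq V]

/- The quantity σ(Y₁,…,Y_p,W,Z): twice the cost of edges between distinct Yᵢ's plus twice
the cost of edges between W and Z plus the cost of edges between ∪ᵢYᵢ and W ∪ Z.
(The first double sum counts each edge between distinct parts Yᵢ, Yⱼ twice.) -/
open Classical in
noncomputable def sigmaVal (G : SimpleGraph V) (c : V → V → ℝ) {p : ℕ}
    (Y : Fin p → Finset V) (W Z : Finset V) : ℝ :=
  (∑ i, ∑ j, if i = j then 0 else ∑ u ∈ Y i, ∑ v ∈ Y j, if G.Adj u v then c u v else 0)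
  + 2 * ∑ u ∈ W, ∑ v ∈ Z, (if G.Adj u v then c u v else 0)
  + ∑ i, ∑ u ∈ Y i, ∑ v ∈ W ∪ Z, (if G.Adj u v then c u v else 0)

section KYNAux

open Classical in
/-- Auxiliary: total cost of edges between `P` and `Q`. -/
noncomputable def cw (G : SimpleGraph V) (c : V → V → ℝ) (P Q : Finset V) : ℝ :=
  ∑ u ∈ P, ∑ v ∈ Q, if G.Adj u v then c u v else 0

set_option linter.unusedSectionVars false

open Classical

variable (G : SimpleGraph V) (c : V → V → ℝ)

lemma cw_nonneg (hc : ∀ u v, G.Adj u v → 0 < c u v) (P Q : Finset V) :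
    0 ≤ cw G c P Q := by
  apply Finset.sum_nonneg; intro u _
  apply Finset.sum_nonneg; intro v _
  by_cases h : G.Adj u v <;> simp [h]
  exact (hc u v h).le

lemma cw_comm (hcsymm : ∀ u v, c u v = c v u) (P Q : Finset V) :
    cw G c P Q = cw G c Q P := by
  unfold cw
  rw [Finset.sum_comm]
  apply Finset.sum_congr rfl; intro v _
  apply Finset.sum_congr rfl; intro u _
  by_cases h : G.Adj u v
  · simp [h, h.symm, hcsymm u v]
  · have h' : ¬ G.Adj v u := fun hh => h hh.symm
    simp [h, h']

lemma cw_union_left {P P' : Finset V} (h : Disjoint P P') (Q : Finset V) :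
    cw G c (P ∪ P') Q = cw G c P Q + cw G c P' Q := by
  unfold cw; rw [Finset.sum_union h]

lemma cw_union_right (P : Finset V) {Q Q' : Finset V} (h : Disjoint Q Q') :
    cw G c P (Q ∪ Q') = cw G c P Q + cw G c P Q' := by
  unfold cw
  rw [← Finset.sum_add_distrib]
  apply Finset.sum_congr rfl; intro u _
  rw [Finset.sum_union h]

lemma cw_mono (hc : ∀ u v, G.Adj u v → 0 < c u v) {P P' Q Q' : Finset V}
    (hP : P ⊆ P') (hQ : Q ⊆ Q') : cw G c P Q ≤ cw G c P' Q' := by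
  unfold cw
  have h1 : ∀ u ∈ P', (0:ℝ) ≤ ∑ v ∈ Q', if G.Adj u v then c u v else 0 := by
    intro u _
    apply Finset.sum_nonneg; intro v _
    by_cases h : G.Adj u v <;> simp [h]
    exact (hc u v h).le
  calc ∑ u ∈ P, ∑ v ∈ Q, (if G.Adj u v then c u v else 0)
      ≤ ∑ u ∈ P, ∑ v ∈ Q', (if G.Adj u v then c u v else 0) := by
        apply Finset.sum_le_sum; intro u _
        apply Finset.sum_le_sum_of_subset_of_nonneg hQ
        intro v _ _
        by_cases h : G.Adj u v <;> simp [h]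
        exact (hc u v h).le
    _ ≤ ∑ u ∈ P', ∑ v ∈ Q', (if G.Adj u v then c u v else 0) :=
        Finset.sum_le_sum_of_subset_of_nonneg hP (fun u hu _ => h1 u hu)

lemma cutVal_eq_cw (X : Finset V) : cutVal G c X = cw G c X Xᶜ := rfl

lemma cutVal_compl (hcsymm : ∀ u v, c u v = c v u) (X : Finset V) :
    cutVal G c Xᶜ = cutVal G c X := by
  rw [cutVal_eq_cw, cutVal_eq_cw, compl_compl, cw_comm G c hcsymm]

lemma cw_sum_le {ι : Type*} [DecidableEq ι] (hc : ∀ u v, G.Adj u v → 0 < c u v)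
    {K : Finset ι} {f : ι → Finset V} {Q : Finset V}
    (hdisj : ∀ a ∈ K, ∀ b ∈ K, a ≠ b → Disjoint (f a) (f b))
    (hsub : ∀ a ∈ K, f a ⊆ Q) (P : Finset V) :
    ∑ a ∈ K, cw G c P (f a) ≤ cw G c P Q := by
  have hPD : (↑K : Set ι).PairwiseDisjoint f := fun a ha b hb hab =>
    hdisj a ha b hb hab
  have h1 : ∑ a ∈ K, cw G c P (f a) = cw G c P (K.biUnion f) := by
    unfold cw
    rw [Finset.sum_comm]
    apply Finset.sum_congr rfl; intro x _
    rw [Finset.sum_biUnion hPD]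
  rw [h1]
  exact cw_mono G c hc (le_refl P) (Finset.biUnion_subset.2 hsub)

lemma cw_biUnion_left {ι : Type*} [DecidableEq ι] {K : Finset ι} {f : ι → Finset V}
    (hdisj : (↑K : Set ι).PairwiseDisjoint f) (Q : Finset V) :
    cw G c (K.biUnion f) Q = ∑ a ∈ K, cw G c (f a) Q := by
  unfold cw; rw [Finset.sum_biUnion hdisj]

lemma submod_cross (hcsymm : ∀ u v, c u v = c v u) (X Y : Finset V) :
    cutVal G c (X ∩ Y) + cutVal G c (X ∪ Y) + 2 * cw G c (X \ Y) (Y \ X)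
      = cutVal G c X + cutVal G c Y := by
  have hXdec : X = (X ∩ Y) ∪ (X \ Y) := by ext a; simp; tauto
  have hXcdec : Xᶜ = (Y \ X) ∪ (X ∪ Y)ᶜ := by ext a; simp; tauto
  have hYdec : Y = (X ∩ Y) ∪ (Y \ X) := by ext a; simp; tauto
  have hYcdec : Yᶜ = (X \ Y) ∪ (X ∪ Y)ᶜ := by ext a; simp; tauto
  have hIcdec : (X ∩ Y)ᶜ = (X \ Y) ∪ ((Y \ X) ∪ (X ∪ Y)ᶜ) := by ext a; simp; tauto
  have hUdec : X ∪ Y = (X ∩ Y) ∪ ((X \ Y) ∪ (Y \ X)) := by ext a; simp; tauto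
  have d12 : Disjoint (X ∩ Y) (X \ Y) := by simp [Finset.disjoint_left]; tauto
  have d13 : Disjoint (X ∩ Y) (Y \ X) := by simp [Finset.disjoint_left]; tauto
  have d23 : Disjoint (X \ Y) (Y \ X) := by simp [Finset.disjoint_left]; tauto
  have d24 : Disjoint (X \ Y) (X ∪ Y)ᶜ := by simp [Finset.disjoint_left]; tauto
  have d34 : Disjoint (Y \ X) (X ∪ Y)ᶜ := by simp [Finset.disjoint_left]; tauto
  have d1_23 : Disjoint (X ∩ Y) ((X \ Y) ∪ (Y \ X)) := by
    simp [Finset.disjoint_left]; tauto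
  have eX : cutVal G c X
      = cw G c (X ∩ Y) (Y \ X) + cw G c (X ∩ Y) (X ∪ Y)ᶜ
        + (cw G c (X \ Y) (Y \ X) + cw G c (X \ Y) (X ∪ Y)ᶜ) := by
    rw [cutVal_eq_cw, hXcdec]
    nth_rewrite 1 [hXdec]
    rw [cw_union_left G c d12, cw_union_right G c _ d34, cw_union_right G c _ d34]
  have eY : cutVal G c Y
      = cw G c (X ∩ Y) (X \ Y) + cw G c (X ∩ Y) (X ∪ Y)ᶜ
        + (cw G c (Y \ X) (X \ Y) + cw G c (Y \ X) (X ∪ Y)ᶜ) := by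
    rw [cutVal_eq_cw, hYcdec]
    nth_rewrite 1 [hYdec]
    rw [cw_union_left G c d13, cw_union_right G c _ d24, cw_union_right G c _ d24]
  have eI : cutVal G c (X ∩ Y)
      = cw G c (X ∩ Y) (X \ Y) + (cw G c (X ∩ Y) (Y \ X) + cw G c (X ∩ Y) (X ∪ Y)ᶜ) := by
    rw [cutVal_eq_cw, hIcdec]
    rw [cw_union_right G c _ (Finset.disjoint_union_right.mpr ⟨d23, d24⟩),
      cw_union_right G c _ d34]
  have eU : cutVal G c (X ∪ Y)
      = cw G c (X ∩ Y) (X ∪ Y)ᶜ + (cw G c (X \ Y) (X ∪ Y)ᶜ + cw G c (Y \ X) (X ∪ Y)ᶜ) := by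
    rw [cutVal_eq_cw]
    nth_rewrite 1 [hUdec]
    rw [cw_union_left G c d1_23, cw_union_left G c d23]
  have hcomm := cw_comm G c hcsymm (X \ Y) (Y \ X)
  linarith

end KYNAux


/-- `BBs A K = ⋃ i ∈ K, A i`. -/
def BBs {p : ℕ} (A : Fin p → Finset V) (K : Finset (Fin p)) : Finset V := K.biUnion A

/-- `WWs A K = ⋃ i ≠ j ∈ K, A i ∩ A j`. -/
def WWs {p : ℕ} (A : Fin p → Finset V) (K : Finset (Fin p)) : Finset V :=
  K.biUnion (fun a => K.biUnion (fun b => if a = b then ∅ else A a ∩ A b))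

/-- The total cost of edges between the distinct sets `A i \ WWs A K`, `i ∈ K`,
where each unordered pair is counted twice. -/
noncomputable def TTs (G : SimpleGraph V) (c : V → V → ℝ) {p : ℕ}
    (A : Fin p → Finset V) (K : Finset (Fin p)) : ℝ :=
  ∑ a ∈ K, ∑ b ∈ K, if a = b then 0
    else cw G c (A a \ WWs A K) (A b \ WWs A K)

section KYNComb

set_option linter.unusedSectionVars false

variable {p : ℕ} (A : Fin p → Finset V)

lemma mem_WWs {K : Finset (Fin p)} {x : V} :
    x ∈ WWs A K ↔ ∃ a ∈ K, ∃ b ∈ K, a ≠ b ∧ x ∈ A a ∧ x ∈ A b := by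
  unfold WWs
  simp only [Finset.mem_biUnion]
  constructor
  · rintro ⟨a, ha, b, hb, hx⟩
    by_cases h : a = b
    · rw [if_pos h] at hx; simp at hx
    · rw [if_neg h] at hx
      exact ⟨a, ha, b, hb, h, (Finset.mem_inter.1 hx).1, (Finset.mem_inter.1 hx).2⟩
  · rintro ⟨a, ha, b, hb, hab, h1, h2⟩
    exact ⟨a, ha, b, hb, by rw [if_neg hab]; exact Finset.mem_inter.2 ⟨h1, h2⟩⟩

lemma mem_BBs {K : Finset (Fin p)} {x : V} :
    x ∈ BBs A K ↔ ∃ a ∈ K, x ∈ A a := by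
  unfold BBs; simp

lemma WWs_subset_BBs {K : Finset (Fin p)} : WWs A K ⊆ BBs A K := by
  intro x hx
  obtain ⟨a, ha, b, hb, hab, h1, h2⟩ := (mem_WWs A).1 hx
  exact (mem_BBs A).2 ⟨a, ha, h1⟩

lemma WWs_mono {K K' : Finset (Fin p)} (h : K ⊆ K') : WWs A K ⊆ WWs A K' := by
  intro x hx
  obtain ⟨a, ha, b, hb, hab, h1, h2⟩ := (mem_WWs A).1 hx
  exact (mem_WWs A).2 ⟨a, h ha, b, h hb, hab, h1, h2⟩

lemma BBs_insert {K : Finset (Fin p)} {k : Fin p} :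
    BBs A (insert k K) = A k ∪ BBs A K := Finset.biUnion_insert

lemma WWs_insert {K : Finset (Fin p)} {k : Fin p} (hk : k ∉ K) :
    WWs A (insert k K) = WWs A K ∪ (A k ∩ BBs A K) := by
  ext x
  simp only [Finset.mem_union, mem_WWs, mem_BBs, Finset.mem_inter, Finset.mem_insert]
  constructor
  · rintro ⟨a, (rfl | ha), b, (rfl | hb), hab, h1, h2⟩
    · exact absurd rfl hab
    · exact Or.inr ⟨h1, b, hb, h2⟩
    · exact Or.inr ⟨h2, a, ha, h1⟩
    · exact Or.inl ⟨a, ha, b, hb, hab, h1, h2⟩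
  · rintro (⟨a, ha, b, hb, hab, h1, h2⟩ | ⟨h1, a, ha, h2⟩)
    · exact ⟨a, Or.inr ha, b, Or.inr hb, hab, h1, h2⟩
    · exact ⟨k, Or.inl rfl, a, Or.inr ha, fun h => hk (h ▸ ha), h1, h2⟩

lemma Yk_eq {K : Finset (Fin p)} {k : Fin p} (hk : k ∉ K) :
    A k \ WWs A (insert k K) = A k \ BBs A K := by
  rw [WWs_insert A hk]
  ext x
  have hsub : x ∈ WWs A K → x ∈ BBs A K := fun h => WWs_subset_BBs A h
  simp only [Finset.mem_sdiff, Finset.mem_union, Finset.mem_inter]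
  tauto

lemma Ya_sub {K : Finset (Fin p)} {k a : Fin p} (hk : k ∉ K) (ha : a ∈ K) :
    A a \ WWs A (insert k K) ⊆ BBs A K \ (WWs A K ∪ A k) := by
  intro x hx
  rw [Finset.mem_sdiff] at hx
  obtain ⟨hxa, hxw⟩ := hx
  rw [WWs_insert A hk] at hxw
  simp only [Finset.mem_union, Finset.mem_inter, not_or] at hxw
  have hxB : x ∈ BBs A K := (mem_BBs A).2 ⟨a, ha, hxa⟩
  rw [Finset.mem_sdiff, Finset.mem_union]
  refine ⟨hxB, ?_⟩
  rintro (h | h)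
  · exact hxw.1 h
  · exact hxw.2 ⟨h, hxB⟩

lemma Ys_disj {K : Finset (Fin p)} {a b : Fin p} (ha : a ∈ K) (hb : b ∈ K) (hab : a ≠ b) :
    Disjoint (A a \ WWs A K) (A b \ WWs A K) := by
  rw [Finset.disjoint_left]
  intro x hxa hxb
  rw [Finset.mem_sdiff] at hxa hxb
  exact hxa.2 ((mem_WWs A).2 ⟨a, ha, b, hb, hab, hxa.1, hxb.1⟩)

lemma WWs_pair {i j : Fin p} (hij : i ≠ j) : WWs A {i, j} = A i ∩ A j := by
  ext x
  simp only [mem_WWs, Finset.mem_insert, Finset.mem_singleton, Finset.mem_inter]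
  constructor
  · rintro ⟨a, (rfl|rfl), b, (rfl|rfl), hab, h1, h2⟩ <;> first | exact absurd rfl hab | tauto
  · rintro ⟨h1, h2⟩; exact ⟨i, Or.inl rfl, j, Or.inr rfl, hij, h1, h2⟩

lemma BBs_pair {i j : Fin p} : BBs A {i, j} = A i ∪ A j := by
  ext x; simp [mem_BBs]

lemma inter_rw {K : Finset (Fin p)} {k : Fin p} (hk : k ∉ K) :
    (WWs A K ∪ A k) ∩ BBs A K = WWs A (insert k K) := by
  rw [WWs_insert A hk]
  ext x
  have hsub : x ∈ WWs A K → x ∈ BBs A K := fun h => WWs_subset_BBs A h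
  simp only [Finset.mem_inter, Finset.mem_union]
  tauto

lemma union_rw {K : Finset (Fin p)} {k : Fin p} :
    (WWs A K ∪ A k) ∪ BBs A K = BBs A (insert k K) := by
  rw [BBs_insert]
  ext x
  have hsub : x ∈ WWs A K → x ∈ BBs A K := fun h => WWs_subset_BBs A h
  simp only [Finset.mem_union]
  tauto

lemma sdiff_rw {K : Finset (Fin p)} {k : Fin p} :
    (WWs A K ∪ A k) \ BBs A K = A k \ BBs A K := by
  ext x
  have hsub : x ∈ WWs A K → x ∈ BBs A K := fun h => WWs_subset_BBs A h
  simp only [Finset.mem_sdiff, Finset.mem_union]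
  tauto

end KYNComb


section KYNChain

set_option linter.unusedSectionVars false

variable (G : SimpleGraph V) (c : V → V → ℝ) {p : ℕ} (A : Fin p → Finset V)

lemma TT_step (hc : ∀ u v, G.Adj u v → 0 < c u v) (hcsymm : ∀ u v, c u v = c v u)
    {K : Finset (Fin p)} {k : Fin p} (hk : k ∉ K) :
    TTs G c A (insert k K) ≤ TTs G c A K
      + 2 * cw G c (A k \ BBs A K) (BBs A K \ (WWs A K ∪ A k)) := by
  have hTT : TTs G c A (insert k K) =
      (∑ b ∈ K, cw G c (A k \ WWs A (insert k K)) (A b \ WWs A (insert k K)))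
      + ((∑ a ∈ K, cw G c (A a \ WWs A (insert k K)) (A k \ WWs A (insert k K)))
      + ∑ a ∈ K, ∑ b ∈ K, (if a = b then 0
          else cw G c (A a \ WWs A (insert k K)) (A b \ WWs A (insert k K)))) := by
    unfold TTs
    rw [Finset.sum_insert hk]
    congr 1
    · rw [Finset.sum_insert hk, if_pos rfl, zero_add]
      apply Finset.sum_congr rfl; intro b hb
      rw [if_neg (by rintro rfl; exact hk hb)]
    · have : ∀ a ∈ K, (∑ b ∈ insert k K, (if a = b then 0
          else cw G c (A a \ WWs A (insert k K)) (A b \ WWs A (insert k K))))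
          = cw G c (A a \ WWs A (insert k K)) (A k \ WWs A (insert k K))
            + ∑ b ∈ K, (if a = b then 0
          else cw G c (A a \ WWs A (insert k K)) (A b \ WWs A (insert k K))) := by
        intro a ha
        rw [Finset.sum_insert hk, if_neg (by rintro rfl; exact hk ha)]
      rw [Finset.sum_congr rfl this, Finset.sum_add_distrib]
  have hb1 : ∑ b ∈ K, cw G c (A k \ WWs A (insert k K)) (A b \ WWs A (insert k K))
      ≤ cw G c (A k \ BBs A K) (BBs A K \ (WWs A K ∪ A k)) := by
    rw [← Yk_eq A hk]
    apply cw_sum_le G c hc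
    · intro a ha b hb hab
      exact Ys_disj A (Finset.mem_insert_of_mem ha) (Finset.mem_insert_of_mem hb) hab
    · intro a ha
      exact Ya_sub A hk ha
  have hb2 : ∑ a ∈ K, cw G c (A a \ WWs A (insert k K)) (A k \ WWs A (insert k K))
      ≤ cw G c (A k \ BBs A K) (BBs A K \ (WWs A K ∪ A k)) := by
    have : ∀ a ∈ K, cw G c (A a \ WWs A (insert k K)) (A k \ WWs A (insert k K))
        = cw G c (A k \ WWs A (insert k K)) (A a \ WWs A (insert k K)) := fun a _ =>
      cw_comm G c hcsymm _ _
    rw [Finset.sum_congr rfl this]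
    exact hb1
  have hb3 : ∑ a ∈ K, ∑ b ∈ K, (if a = b then 0
        else cw G c (A a \ WWs A (insert k K)) (A b \ WWs A (insert k K)))
      ≤ TTs G c A K := by
    unfold TTs
    apply Finset.sum_le_sum; intro a ha
    apply Finset.sum_le_sum; intro b hb
    by_cases h : a = b
    · simp [h]
    · rw [if_neg h, if_neg h]
      exact cw_mono G c hc
        (Finset.sdiff_subset_sdiff (Finset.Subset.refl _)
          (WWs_mono A (Finset.subset_insert k K)))
        (Finset.sdiff_subset_sdiff (Finset.Subset.refl _)
          (WWs_mono A (Finset.subset_insert k K)))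
  rw [hTT]
  linarith

lemma TTs_pair (hcsymm : ∀ u v, c u v = c v u) {i j : Fin p} (hij : i ≠ j) :
    TTs G c A {i, j} = 2 * cw G c (A i \ A j) (A j \ A i) := by
  unfold TTs
  rw [WWs_pair A hij]
  rw [Finset.sum_pair hij, Finset.sum_pair hij, Finset.sum_pair hij]
  rw [if_pos rfl, if_pos rfl, if_neg hij, if_neg hij.symm]
  rw [Finset.sdiff_inter_self_left, Finset.sdiff_inter_self_right]
  rw [cw_comm G c hcsymm (A j \ A i) (A i \ A j)]
  ring

lemma kyn_chain (hc : ∀ u v, G.Adj u v → 0 < c u v) (hcsymm : ∀ u v, c u v = c v u)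
    (hmin : ∀ (k : Fin p) (K : Finset (Fin p)), k ∉ K → 2 ≤ K.card →
      cutVal G c (A k) ≤ cutVal G c (WWs A K ∩ A k)) :
    ∀ (n : ℕ) (K : Finset (Fin p)) (i j : Fin p), K.card = n + 2 → i ∈ K → j ∈ K → i ≠ j →
      cutVal G c (WWs A K) + cutVal G c (BBs A K) + TTs G c A K
        ≤ cutVal G c (A i) + cutVal G c (A j) := by
  intro n
  induction n with
  | zero =>
    intro K i j hcard hi hj hij
    have hsub : ({i, j} : Finset (Fin p)) ⊆ K := by
      intro x hx
      rcases Finset.mem_insert.1 hx with rfl | hx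
      · exact hi
      · rw [Finset.mem_singleton.1 hx]; exact hj
    have hK : K = {i, j} :=
      (Finset.eq_of_subset_of_card_le hsub (by rw [hcard, Finset.card_pair hij])).symm
    rw [hK, WWs_pair A hij, BBs_pair A, TTs_pair G c A hcsymm hij]
    exact le_of_eq (submod_cross G c hcsymm (A i) (A j))
  | succ n IH =>
    intro K i j hcard hi hj hij
    have hsub : ({i, j} : Finset (Fin p)) ⊆ K := by
      intro x hx
      rcases Finset.mem_insert.1 hx with rfl | hx
      · exact hi
      · rw [Finset.mem_singleton.1 hx]; exact hj
    have hss : ({i, j} : Finset (Fin p)) ⊂ K := by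
      refine Finset.ssubset_iff_subset_ne.mpr ⟨hsub, fun h => ?_⟩
      have := Finset.card_pair hij
      rw [h, hcard] at this
      omega
    obtain ⟨k, hkK, hknij⟩ := Finset.exists_of_ssubset hss
    have hki : k ≠ i := by rintro rfl; exact hknij (Finset.mem_insert_self _ _)
    have hkj : k ≠ j := by
      rintro rfl; exact hknij (Finset.mem_insert_of_mem (Finset.mem_singleton_self _))
    have hk' : k ∉ K.erase k := Finset.notMem_erase _ _
    have hKK : insert k (K.erase k) = K := Finset.insert_erase hkK
    have hcard' : (K.erase k).card = n + 2 := by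
      rw [Finset.card_erase_of_mem hkK, hcard]
      omega
    have hIH := IH (K.erase k) i j hcard'
      (Finset.mem_erase.2 ⟨Ne.symm hki, hi⟩)
      (Finset.mem_erase.2 ⟨Ne.symm hkj, hj⟩) hij
    have s1 : cutVal G c (A k) ≤ cutVal G c (WWs A (K.erase k) ∩ A k) :=
      hmin k (K.erase k) hk' (by omega)
    have s2 := submod_cross G c hcsymm (WWs A (K.erase k)) (A k)
    have s3 := submod_cross G c hcsymm (WWs A (K.erase k) ∪ A k) (BBs A (K.erase k))
    rw [inter_rw A hk', union_rw A, sdiff_rw A, hKK] at s3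
    have s4 := TT_step G c A hc hcsymm hk'
    rw [hKK] at s4
    have s5 := cw_nonneg G c hc (WWs A (K.erase k) \ A k) (A k \ WWs A (K.erase k))
    linarith

end KYNChain

/-- The uncrossing lemma of Kamidoi–Yoshida–Nagamochi: the minimum terminal cuts
(Aᵢᶜ, Aᵢ) can be uncrossed into a partition (Y₁, …, Y_p, W, Z) of V into p+2 nonempty
parts with σ(Y₁,…,Y_p,W,Z) ≤ min{d(Aᵢ)+d(Aⱼ) : i ≠ j}. -/
theorem uncrossing_lemma
    (G : SimpleGraph V)
    (c : V → V → ℝ) (hc : ∀ u v, G.Adj u v → 0 < c u v) (hcsymm : ∀ u v, c u v = c v u)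
    (R U : Finset V) (hRne : R.Nonempty) (hRU : R ⊂ U) (hUV : U ⊂ Finset.univ)
    (p : ℕ) (hp : 2 ≤ p) (u : Fin p → V) (hu : Function.Injective u)
    (hSUR : Finset.image u Finset.univ ⊆ U \ R)
    (A : Fin p → Finset V)
    (hA : ∀ i, IsMinTerminalCut G c
      ((Finset.image u Finset.univ ∪ R).erase (u i)) Uᶜ (A i)ᶜ)
    (hui : ∀ i, u i ∈ A i ∧ ∀ j, j ≠ i → u i ∉ A j)
    (Z : Finset V) (hZ : Z = (Finset.univ.biUnion A)ᶜ)
    (W : Finset V)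
    (hW : W = (Finset.univ : Finset (Fin p × Fin p)).biUnion
      (fun q => if q.1 = q.2 then ∅ else A q.1 ∩ A q.2))
    (Y : Fin p → Finset V) (hY : ∀ i, Y i = A i \ W) :
    (∀ i, (Y i).Nonempty) ∧ W.Nonempty ∧ Z.Nonempty ∧
    (∀ i j, i ≠ j → Disjoint (Y i) (Y j)) ∧
    (∀ i, Disjoint (Y i) W) ∧ (∀ i, Disjoint (Y i) Z) ∧ Disjoint W Z ∧
    (Finset.univ.biUnion Y) ∪ W ∪ Z = Finset.univ ∧
    (∀ i j, i ≠ j → sigmaVal G c Y W Z ≤ cutVal G c (A i) + cutVal G c (A j)) := by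
  classical
  have hUcA : ∀ i, Uᶜ ⊆ A i := by
    intro i x hx
    by_contra hxa
    exact Finset.mem_compl.1 ((hA i).1.2 (Finset.mem_compl.2 hxa)) hx
  have huNotR : ∀ m : Fin p, u m ∉ R := by
    intro m hm
    have : u m ∈ U \ R := hSUR (Finset.mem_image.2 ⟨m, Finset.mem_univ m, rfl⟩)
    exact (Finset.mem_sdiff.1 this).2 hm
  have hRnotA : ∀ i, ∀ r ∈ R, r ∉ A i := by
    intro i r hr hrA
    have hrm : r ∈ (Finset.image u Finset.univ ∪ R).erase (u i) :=
      Finset.mem_erase.2 ⟨fun h => huNotR i (h ▸ hr), Finset.mem_union_right _ hr⟩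
    exact Finset.mem_compl.1 ((hA i).1.1 hrm) hrA
  have hminX : ∀ (k : Fin p) (X : Finset V), Uᶜ ⊆ X → (∀ m : Fin p, m ≠ k → u m ∉ X) →
      (∀ r ∈ R, r ∉ X) → cutVal G c (A k) ≤ cutVal G c X := by
    intro k X hUX huX hRX
    have hterm : IsTerminalCut ((Finset.image u Finset.univ ∪ R).erase (u k)) Uᶜ Xᶜ := by
      constructor
      · intro y hy
        rcases Finset.mem_erase.1 hy with ⟨hyne, hyun⟩
        rcases Finset.mem_union.1 hyun with hyim | hyR
        · rcases Finset.mem_image.1 hyim with ⟨m, -, rfl⟩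
          have hmk : m ≠ k := fun h => hyne (by rw [h])
          exact Finset.mem_compl.2 (huX m hmk)
        · exact Finset.mem_compl.2 (hRX y hyR)
      · intro y hy
        exact Finset.mem_compl.2 fun hyU => Finset.mem_compl.1 hy (hUX hyU)
    have hle := (hA k).2 Xᶜ hterm
    rwa [cutVal_compl G c hcsymm, cutVal_compl G c hcsymm] at hle
  have hmin : ∀ (k : Fin p) (K : Finset (Fin p)), k ∉ K → 2 ≤ K.card →
      cutVal G c (A k) ≤ cutVal G c (WWs A K ∩ A k) := by
    intro k K hk hK2
    obtain ⟨a, ha, b, hb, hab⟩ := Finset.one_lt_card.1 (by omega : 1 < K.card)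
    apply hminX k
    · intro x hx
      exact Finset.mem_inter.2
        ⟨(mem_WWs A).2 ⟨a, ha, b, hb, hab, hUcA a hx, hUcA b hx⟩, hUcA k hx⟩
    · intro m hmk hmem
      exact (hui m).2 k (Ne.symm hmk) (Finset.mem_inter.1 hmem).2
    · intro r hr hmem
      exact hRnotA k r hr (Finset.mem_inter.1 hmem).2
  have hWW : W = WWs A Finset.univ := by
    rw [hW]
    ext x
    constructor
    · intro hx
      rcases Finset.mem_biUnion.1 hx with ⟨q, -, hq⟩
      by_cases h : q.1 = q.2
      · rw [if_pos h] at hq; exact absurd hq (Finset.notMem_empty x)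
      · rw [if_neg h] at hq
        exact (mem_WWs A).2 ⟨q.1, Finset.mem_univ _, q.2, Finset.mem_univ _, h,
          (Finset.mem_inter.1 hq).1, (Finset.mem_inter.1 hq).2⟩
    · intro hx
      rcases (mem_WWs A).1 hx with ⟨a, -, b, -, hab, h1, h2⟩
      refine Finset.mem_biUnion.2 ⟨(a, b), Finset.mem_univ _, ?_⟩
      show x ∈ if a = b then (∅ : Finset V) else A a ∩ A b
      rw [if_neg hab]
      exact Finset.mem_inter.2 ⟨h1, h2⟩
  have hZB : Z = (BBs A Finset.univ)ᶜ := hZ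
  have huWnot : ∀ i, u i ∉ W := by
    intro i hiW
    rw [hWW] at hiW
    rcases (mem_WWs A).1 hiW with ⟨a, -, b, -, hab, h1, h2⟩
    by_cases h : a = i
    · exact (hui i).2 b (fun hbi => hab (h.trans hbi.symm)) h2
    · exact (hui i).2 a h h1
  have hYne : ∀ i, (Y i).Nonempty := fun i =>
    ⟨u i, by rw [hY i]; exact Finset.mem_sdiff.2 ⟨(hui i).1, huWnot i⟩⟩
  have hWne : W.Nonempty := by
    obtain ⟨x, -, hxU⟩ := Finset.exists_of_ssubset hUV
    have hxc : x ∈ Uᶜ := Finset.mem_compl.2 hxU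
    have h01 : (⟨0, by omega⟩ : Fin p) ≠ ⟨1, by omega⟩ := by
      intro h
      have := congrArg Fin.val h
      simp at this
    exact ⟨x, by
      rw [hWW]
      exact (mem_WWs A).2 ⟨⟨0, by omega⟩, Finset.mem_univ _, ⟨1, by omega⟩,
        Finset.mem_univ _, h01, hUcA _ hxc, hUcA _ hxc⟩⟩
  have hZne : Z.Nonempty := by
    obtain ⟨r, hr⟩ := hRne
    refine ⟨r, ?_⟩
    rw [hZ]
    refine Finset.mem_compl.2 fun hmem => ?_
    rcases Finset.mem_biUnion.1 hmem with ⟨i, -, hri⟩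
    exact hRnotA i r hr hri
  have hYYd : ∀ i j, i ≠ j → Disjoint (Y i) (Y j) := by
    intro i j hij
    rw [hY i, hY j, hWW]
    exact Ys_disj A (Finset.mem_univ i) (Finset.mem_univ j) hij
  have hYW : ∀ i, Disjoint (Y i) W := fun i => by
    rw [hY i]; exact Finset.sdiff_disjoint
  have hAZ : ∀ i, ∀ x ∈ A i, x ∉ Z := by
    intro i x hx hxZ
    rw [hZ] at hxZ
    exact Finset.mem_compl.1 hxZ (Finset.mem_biUnion.2 ⟨i, Finset.mem_univ i, hx⟩)
  have hYZ : ∀ i, Disjoint (Y i) Z := by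
    intro i
    rw [Finset.disjoint_left]
    intro x hx
    rw [hY i] at hx
    exact hAZ i x (Finset.mem_sdiff.1 hx).1
  have hWZ : Disjoint W Z := by
    rw [Finset.disjoint_left]
    intro x hx
    rw [hWW] at hx
    rcases (mem_WWs A).1 hx with ⟨a, -, b, -, hab, h1, h2⟩
    exact hAZ a x h1
  have hcover : (Finset.univ.biUnion Y) ∪ W ∪ Z = Finset.univ := by
    apply Finset.eq_univ_of_forall
    intro x
    by_cases hxW : x ∈ W
    · exact Finset.mem_union_left _ (Finset.mem_union_right _ hxW)
    by_cases hxZ : x ∈ Z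
    · exact Finset.mem_union_right _ hxZ
    have hxB : x ∈ Finset.univ.biUnion A := by
      by_contra h
      exact hxZ (by rw [hZ]; exact Finset.mem_compl.2 h)
    rcases Finset.mem_biUnion.1 hxB with ⟨i, -, hxi⟩
    refine Finset.mem_union_left _ (Finset.mem_union_left _ ?_)
    exact Finset.mem_biUnion.2 ⟨i, Finset.mem_univ i,
      by rw [hY i]; exact Finset.mem_sdiff.2 ⟨hxi, hxW⟩⟩
  refine ⟨hYne, hWne, hZne, hYYd, hYW, hYZ, hWZ, hcover, ?_⟩
  intro i j hij
  have hdisjYZ : Disjoint (Finset.univ.biUnion Y) Z :=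
    (Finset.disjoint_biUnion_left _ _ _).2 (fun a _ => hYZ a)
  have hdisjYW : Disjoint (Finset.univ.biUnion Y) W :=
    (Finset.disjoint_biUnion_left _ _ _).2 (fun a _ => hYW a)
  have hWc : Wᶜ = (Finset.univ.biUnion Y) ∪ Z := by
    ext x
    constructor
    · intro hx
      have hxW : x ∉ W := Finset.mem_compl.1 hx
      have hxu : x ∈ (Finset.univ.biUnion Y) ∪ W ∪ Z := by
        rw [hcover]; exact Finset.mem_univ x
      rcases Finset.mem_union.1 hxu with h | h
      · rcases Finset.mem_union.1 h with h' | h'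
        · exact Finset.mem_union_left _ h'
        · exact absurd h' hxW
      · exact Finset.mem_union_right _ h
    · intro hx
      refine Finset.mem_compl.2 ?_
      rcases Finset.mem_union.1 hx with h | h
      · exact fun hW' => (Finset.disjoint_left.1 hdisjYW) h hW'
      · exact fun hW' => (Finset.disjoint_left.1 hWZ) hW' h
  have hZc : Zᶜ = (Finset.univ.biUnion Y) ∪ W := by
    ext x
    constructor
    · intro hx
      have hxZ : x ∉ Z := Finset.mem_compl.1 hx
      have hxu : x ∈ (Finset.univ.biUnion Y) ∪ W ∪ Z := by
        rw [hcover]; exact Finset.mem_univ x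
      rcases Finset.mem_union.1 hxu with h | h
      · exact h
      · exact absurd h hxZ
    · intro hx
      refine Finset.mem_compl.2 ?_
      rcases Finset.mem_union.1 hx with h | h
      · exact fun hZ' => (Finset.disjoint_left.1 hdisjYZ) h hZ'
      · exact fun hZ' => (Finset.disjoint_left.1 hWZ) h hZ'
  have ecW : cutVal G c W = cw G c W (Finset.univ.biUnion Y) + cw G c W Z := by
    rw [cutVal_eq_cw, hWc, cw_union_right G c _ hdisjYZ]
  have ecZ : cutVal G c Z = cw G c Z (Finset.univ.biUnion Y) + cw G c Z W := by
    rw [cutVal_eq_cw, hZc, cw_union_right G c _ hdisjYW]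
  have hPD : (↑(Finset.univ : Finset (Fin p)) : Set (Fin p)).PairwiseDisjoint Y :=
    fun a _ b _ hab => hYYd a b hab
  have esumW : ∑ k, cw G c (Y k) W = cw G c (Finset.univ.biUnion Y) W :=
    (cw_biUnion_left G c hPD W).symm
  have esumZ : ∑ k, cw G c (Y k) Z = cw G c (Finset.univ.biUnion Y) Z :=
    (cw_biUnion_left G c hPD Z).symm
  have esplit : ∑ k, cw G c (Y k) (W ∪ Z) = ∑ k, cw G c (Y k) W + ∑ k, cw G c (Y k) Z := by
    rw [← Finset.sum_add_distrib]
    exact Finset.sum_congr rfl fun k _ => cw_union_right G c _ hWZ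
  have hsig : sigmaVal G c Y W Z = TTs G c A Finset.univ + 2 * cw G c W Z
      + ∑ k, cw G c (Y k) (W ∪ Z) := by
    have h0 : sigmaVal G c Y W Z
        = (∑ a, ∑ b, if a = b then 0 else cw G c (Y a) (Y b)) + 2 * cw G c W Z
          + ∑ k, cw G c (Y k) (W ∪ Z) := rfl
    rw [h0]
    congr 2
    unfold TTs
    apply Finset.sum_congr rfl; intro a _
    apply Finset.sum_congr rfl; intro b _
    by_cases h : a = b
    · simp [h]
    · rw [if_neg h, if_neg h, hY a, hY b, hWW]
  have hchain := kyn_chain G c A hc hcsymm hmin (p - 2) Finset.univ i j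
    (by rw [Finset.card_univ, Fintype.card_fin]; omega)
    (Finset.mem_univ i) (Finset.mem_univ j) hij
  have hZBB : cutVal G c Z = cutVal G c (BBs A Finset.univ) := by
    rw [hZB, cutVal_compl G c hcsymm]
  have hWWW : cutVal G c W = cutVal G c (WWs A Finset.univ) := by rw [hWW]
  have c1 := cw_comm G c hcsymm (Finset.univ.biUnion Y) W
  have c2 := cw_comm G c hcsymm (Finset.univ.biUnion Y) Z
  have c3 := cw_comm G c hcsymm W Z
  linarith
end
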